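/- Fix κ² > 0. Let θ : ℝ → ℝ be C² with θ(t + 2π) = θ(t) − 2π for all t, solving θ''(t) = κ² sin θ(t) cos θ(t), and with θ'(t) ≠ 0 for all t. Then for every C¹ 2π-periodic ψ : ℝ → ℝ, setting φ := θ' ψ, one has ∫_{−π}^{π} ( |φ'(t)|² + κ² φ(t)² cos 2θ(t) ) dt = ∫_{−π}^{π} |θ'(t)|² |ψ'(t)|² dt ≥ 0. In particular, the second variation of the in-plane energy at such θ is nonnegative, so the degree-zero solutions are locally stable critical points. -/

import Mathlib

open Real Function

/-!
Write `u = θ'`. Differentiating the pendulum equation gives the Jacobi equation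
`u'' = κ² cos 2θ · u`, and for any solution `u` of `u'' = q u` and `φ = u ψ` one has the
pointwise identity `φ'² + q φ² = u² ψ'² + (u u' ψ²)'`. The last term is the derivative of a
`2π`-periodic function, so it integrates to zero over a period.
-/

theorem periodic_deriv_of_add_eq_add_const {f : ℝ → ℝ} {c d : ℝ}
    (h : ∀ t, f (t + c) = f t + d) : Periodic (deriv f) c := fun t => by
  rw [← deriv_comp_add_const, funext h, deriv_add_const]

theorem hasDerivAt_sin_mul_cos {f : ℝ → ℝ} {f' t : ℝ} (hf : HasDerivAt f f' t) :
    HasDerivAt (fun s => Real.sin (f s) * Real.cos (f s)) (Real.cos (2 * f t) * f') t := by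
  refine (hf.sin.fun_mul hf.cos).congr_deriv ?_
  rw [Real.cos_two_mul]
  linear_combination -f' * Real.sin_sq_add_cos_sq (f t)

theorem hasDerivAt_mul_deriv_mul_sq {u ψ q : ℝ → ℝ} {t : ℝ} (hu : DifferentiableAt ℝ u t)
    (hu' : HasDerivAt (deriv u) (q t * u t) t) (hψ : DifferentiableAt ℝ ψ t) :
    HasDerivAt (fun s => u s * deriv u s * ψ s ^ 2)
      (deriv (fun s => u s * ψ s) t ^ 2 + q t * (u t * ψ t) ^ 2
        - u t ^ 2 * deriv ψ t ^ 2) t := by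
  refine ((hu.hasDerivAt.fun_mul hu').fun_mul (hψ.hasDerivAt.fun_pow 2)).congr_deriv ?_
  rw [deriv_fun_mul hu hψ]
  ring

section Jacobi

variable {u ψ q : ℝ → ℝ} (hu : Differentiable ℝ u) (hu' : ∀ t, HasDerivAt (deriv u) (q t * u t) t)
  (hψ : ContDiff ℝ 1 ψ) (hq : Continuous q)
include hu hu' hψ hq

theorem integral_deriv_mul_sq_add_mul_sq {a b : ℝ}
    (hbdry : u b * deriv u b * ψ b ^ 2 = u a * deriv u a * ψ a ^ 2) :
    ∫ t in a..b, deriv (fun s => u s * ψ s) t ^ 2 + q t * (u t * ψ t) ^ 2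
      = ∫ t in a..b, u t ^ 2 * deriv ψ t ^ 2 := by
  have hψd : Differentiable ℝ ψ := hψ.differentiable one_ne_zero
  have huc := hu.continuous
  have hψc := hψ.continuous
  have hψ'c := hψ.continuous_deriv_one
  have hu'c : Continuous (deriv u) := continuous_iff_continuousAt.2 fun t => (hu' t).continuousAt
  have hφ' : deriv (fun s => u s * ψ s) = fun t => deriv u t * ψ t + u t * deriv ψ t :=
    funext fun t => deriv_fun_mul (hu t) (hψd t)
  have hφ'c : Continuous (deriv fun s => u s * ψ s) := by
    rw [hφ']
    fun_prop
  have hlhs : Continuous fun t => deriv (fun s => u s * ψ s) t ^ 2 + q t * (u t * ψ t) ^ 2 := by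
    fun_prop
  have hrhs : Continuous fun t => u t ^ 2 * deriv ψ t ^ 2 := by fun_prop
  have hFTC := intervalIntegral.integral_eq_sub_of_hasDerivAt
    (fun t _ => hasDerivAt_mul_deriv_mul_sq (hu t) (hu' t) (hψd t))
    ((hlhs.sub hrhs).intervalIntegrable a b)
  rwa [hbdry, sub_self, intervalIntegral.integral_sub (hlhs.intervalIntegrable a b)
    (hrhs.intervalIntegrable a b), sub_eq_zero] at hFTC

theorem Function.Periodic.integral_deriv_mul_sq_add_mul_sq {c : ℝ} (hup : Periodic u c)
    (hψp : Periodic ψ c) (a : ℝ) :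
    ∫ t in a..a + c, deriv (fun s => u s * ψ s) t ^ 2 + q t * (u t * ψ t) ^ 2
      = ∫ t in a..a + c, u t ^ 2 * deriv ψ t ^ 2 :=
  _root_.integral_deriv_mul_sq_add_mul_sq hu hu' hψ hq <| by
    rw [hup a, periodic_deriv_of_add_eq_add_const (fun t => by rw [hup t, add_zero]) a, hψp a]

end Jacobi

theorem second_variation_degree_zero_nonneg
    (κ : ℝ)
    (θ : ℝ → ℝ) (hθ : ContDiff ℝ 2 θ)
    (hqp : ∀ t : ℝ, θ (t + 2 * π) = θ t - 2 * π)
    (hode : ∀ t : ℝ, deriv (deriv θ) t = κ ^ 2 * Real.sin (θ t) * Real.cos (θ t))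
    (ψ : ℝ → ℝ) (hψ : ContDiff ℝ 1 ψ)
    (hψper : ∀ t : ℝ, ψ (t + 2 * π) = ψ t) :
    (∫ t in (-π)..π,
        ((deriv (fun s => deriv θ s * ψ s) t) ^ 2
          + κ ^ 2 * (deriv θ t * ψ t) ^ 2 * Real.cos (2 * θ t)))
      = (∫ t in (-π)..π, (deriv θ t) ^ 2 * (deriv ψ t) ^ 2) ∧
    0 ≤ ∫ t in (-π)..π,
        ((deriv (fun s => deriv θ s * ψ s) t) ^ 2
          + κ ^ 2 * (deriv θ t * ψ t) ^ 2 * Real.cos (2 * θ t)) := by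
  have hθd : Differentiable ℝ θ := hθ.differentiable (by norm_num)
  have hjacobi (t : ℝ) :
      HasDerivAt (deriv (deriv θ)) (κ ^ 2 * Real.cos (2 * θ t) * deriv θ t) t := by
    rw [funext hode]
    simpa only [mul_assoc] using ((hasDerivAt_sin_mul_cos (hθd t).hasDerivAt).const_mul (κ ^ 2))
  have hθ'p : Periodic (deriv θ) (2 * π) :=
    periodic_deriv_of_add_eq_add_const fun t => by rw [hqp t, sub_eq_add_neg]
  have hidentity := hθ'p.integral_deriv_mul_sq_add_mul_sq hθ.differentiable_deriv_two hjacobi hψ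
    (by fun_prop) hψper (-π)
  rw [neg_add_eq_sub, two_mul, add_sub_cancel_right] at hidentity
  simp only [mul_right_comm _ _ (Real.cos (2 * θ _))]
  rw [hidentity]
  exact ⟨rfl, intervalIntegral.integral_nonneg (by linarith [pi_pos]) fun t _ => by positivity⟩
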